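/- For t > 0 and x, y ∈ (−2,2) define L_t(x,y) := ∑_{n=1}^{∞} e^{−tn/2}·T_n(x/2)·T_n(y/2)/n and M_t(x,y) := ∑_{n=1}^{∞} e^{−tn/2}·(√(4−x²)/2)·(√(4−y²)/2)·U_{n−1}(x/2)·U_{n−1}(y/2)/n (both series converge absolutely). Then for every Υ ∈ (0,1) there exists a constant C > 1 such that for all x, y ∈ [−2+Υ, 2−Υ] and all t ∈ (0,1]: C^{−1}·(t²+(x−y)²)^{−1/4} ≤ exp(L_t(x,y)) ≤ C·(t²+(x−y)²)^{−1/4} and C^{−1}·(t²+(x−y)²)^{−1/4} ≤ exp(M_t(x,y)) ≤ C·(t²+(x−y)²)^{−1/4}; moreover, C can be chosen so that the upper bound for exp(M_t(x,y)) holds for all x, y ∈ (−2,2) and t ∈ (0,1]. Finally, for all t ≥ 1 and all x, y ∈ (−2,2): exp(L_t(x,y)) ≤ e and exp(M_t(x,y)) ≤ e. -/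

import Mathlib

open MeasureTheory Real Filter Set

noncomputable section

/-- Term of the series defining `L_t(x,y)`. -/
def Lterm (t x y : ℝ) (n : ℕ) : ℝ :=
  Real.exp (-t * (n + 1) / 2) *
    Polynomial.eval (x / 2) (Polynomial.Chebyshev.T ℝ ((n : ℤ) + 1)) *
    Polynomial.eval (y / 2) (Polynomial.Chebyshev.T ℝ ((n : ℤ) + 1)) / ((n : ℝ) + 1)

/-- Term of the series defining `M_t(x,y)`. -/
def Mterm (t x y : ℝ) (n : ℕ) : ℝ :=
  Real.exp (-t * (n + 1) / 2) *
    (Real.sqrt (4 - x ^ 2) / 2) * (Real.sqrt (4 - y ^ 2) / 2) *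
    Polynomial.eval (x / 2) (Polynomial.Chebyshev.U ℝ (n : ℤ)) *
    Polynomial.eval (y / 2) (Polynomial.Chebyshev.U ℝ (n : ℤ)) / ((n : ℝ) + 1)

/-- `L_t(x,y) = ∑_{n≥1} e^{-tn/2} T_n(x/2) T_n(y/2) / n`. -/
def Lfun (t x y : ℝ) : ℝ := ∑' n : ℕ, Lterm t x y n

/-- `M_t(x,y) = ∑_{n≥1} e^{-tn/2} (√(4−x²)/2)(√(4−y²)/2) U_{n−1}(x/2) U_{n−1}(y/2) / n`. -/
def Mfun (t x y : ℝ) : ℝ := ∑' n : ℕ, Mterm t x y n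


/-!
Put `x = 2 cos α`, `y = 2 cos β` with `α, β ∈ [0, π]` and `r = e^{-t/2}`. The product-to-sum
formulas and `-log (1 - z) = ∑ zⁿ / n` at `z = r e^{iθ}` give
`L = -¼ log (E(α - β) E(α + β))` and `M = -¼ log (E(α - β) / E(α + β))`, where
`E(θ) = |1 - r e^{iθ}|² = (1 - r)² + 2r (1 - cos θ)`.

For `t ≤ 1` we have `1 - r ≍ t`, and `(x - y)² = 8 sin²((α + β)/2) (1 - cos (α - β))`; hence
`E(α - β) ≥ (t² + (x - y)²) / 16` always, while in the bulk, where `sin² α = 1 - x²/4` and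
`sin² β` are bounded below and with them `sin²((α + β)/2)`, also `E(α - β) ≲ t² + (x - y)²`
and `E(α + β) ≍ 1`. For `t ≥ 1`, `e^{-2} ≤ (1 - r)² ≤ E ≤ 4 ≤ e²` bounds `L` and `M` by `1`.
-/

def poissonDenom (r θ : ℝ) : ℝ := 1 - 2 * r * cos θ + r ^ 2

lemma poissonDenom_eq (r θ : ℝ) : poissonDenom r θ = (1 - r) ^ 2 + 2 * r * (1 - cos θ) := by
  unfold poissonDenom; ring

lemma normSq_one_sub_mul_exp (r θ : ℝ) :
    Complex.normSq (1 - r * Complex.exp (θ * Complex.I)) = poissonDenom r θ := by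
  rw [Complex.normSq_apply, poissonDenom]
  simp only [Complex.sub_re, Complex.sub_im, Complex.one_re, Complex.one_im,
    Complex.re_ofReal_mul, Complex.im_ofReal_mul, Complex.exp_ofReal_mul_I_re,
    Complex.exp_ofReal_mul_I_im]
  linear_combination r ^ 2 * sin_sq_add_cos_sq θ

lemma poissonDenom_pos {r : ℝ} (hr : |r| < 1) (θ : ℝ) : 0 < poissonDenom r θ := by
  have hcos : r * cos θ ≤ |r| := (le_abs_self _).trans <| by
    rw [abs_mul]; exact mul_le_of_le_one_right (abs_nonneg r) (abs_cos_le_one θ)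
  unfold poissonDenom; nlinarith [sq_abs r, pow_pos (sub_pos.2 hr) 2]

lemma poissonDenom_le_four {r : ℝ} (hr : |r| ≤ 1) (θ : ℝ) : poissonDenom r θ ≤ 4 := by
  have hcos : -(r * cos θ) ≤ |r| := (neg_le_abs _).trans <| by
    rw [abs_mul]; exact mul_le_of_le_one_right (abs_nonneg r) (abs_cos_le_one θ)
  unfold poissonDenom; nlinarith [sq_abs r, abs_nonneg r]

theorem hasSum_pow_mul_cos_div {r : ℝ} (hr : |r| < 1) (θ : ℝ) :
    HasSum (fun n : ℕ => r ^ (n + 1) * cos ((n + 1) * θ) / (n + 1))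
      (-(1 / 2) * log (poissonDenom r θ)) := by
  set z : ℂ := r * Complex.exp (θ * Complex.I) with hz
  have hz1 : ‖z‖ < 1 := by
    rwa [hz, norm_mul, Complex.norm_exp_ofReal_mul_I, mul_one, Complex.norm_real, Real.norm_eq_abs]
  have hre := (Complex.hasSum_taylorSeries_neg_log hz1).mapL Complex.reCLM
  have hterm : ∀ n : ℕ, Complex.reCLM (z ^ n / n) = r ^ n * cos (n * θ) / n := fun n => by
    rw [Complex.reCLM_apply, hz, mul_pow, ← Complex.exp_nat_mul, ← Complex.ofReal_pow,
      show (n : ℂ) * (θ * Complex.I) = ((n * θ : ℝ) : ℂ) * Complex.I by push_cast; ring,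
      ← Complex.ofReal_natCast, Complex.div_ofReal_re, Complex.re_ofReal_mul,
      Complex.exp_ofReal_mul_I_re]
  have hval : Complex.reCLM (-Complex.log (1 - z)) = -(1 / 2) * log (poissonDenom r θ) := by
    rw [Complex.reCLM_apply, Complex.neg_re, Complex.log_re, Complex.norm_def,
      normSq_one_sub_mul_exp, log_sqrt (poissonDenom_pos hr θ).le]
    ring
  rw [hval] at hre
  simp only [hterm] at hre
  simpa using (hasSum_nat_add_iff' 1).2 hre

lemma exp_neg_mul_succ_div_two (t : ℝ) (n : ℕ) :
    exp (-t * (n + 1) / 2) = exp (-t / 2) ^ (n + 1) := by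
  rw [← exp_nat_mul]; push_cast; ring_nf

lemma abs_exp_neg_half_lt_one {t : ℝ} (ht : 0 < t) : |exp (-t / 2)| < 1 := by
  rw [abs_of_pos (exp_pos _), exp_lt_one_iff]; linarith

lemma sqrt_four_sub_two_cos_sq {α : ℝ} (hα : α ∈ Icc 0 π) :
    √(4 - (2 * cos α) ^ 2) / 2 = sin α := by
  rw [show 4 - (2 * cos α) ^ 2 = (2 * sin α) ^ 2 by linear_combination -4 * sin_sq_add_cos_sq α,
    sqrt_sq (by linarith [sin_nonneg_of_nonneg_of_le_pi hα.1 hα.2])]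
  ring

lemma Lterm_two_cos (t α β : ℝ) (n : ℕ) :
    Lterm t (2 * cos α) (2 * cos β) n =
      exp (-t / 2) ^ (n + 1) * cos ((n + 1) * α) * cos ((n + 1) * β) / (n + 1) := by
  have hT (γ : ℝ) : Polynomial.eval (2 * cos γ / 2) (Polynomial.Chebyshev.T ℝ (n + 1)) =
      cos ((n + 1) * γ) := by
    rw [mul_div_cancel_left₀ _ two_ne_zero, Polynomial.Chebyshev.T_real_cos]; push_cast; rfl
  rw [Lterm, exp_neg_mul_succ_div_two, hT, hT]

lemma Mterm_two_cos (t : ℝ) {α β : ℝ} (hα : α ∈ Icc 0 π) (hβ : β ∈ Icc 0 π) (n : ℕ) :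
    Mterm t (2 * cos α) (2 * cos β) n =
      exp (-t / 2) ^ (n + 1) * sin ((n + 1) * α) * sin ((n + 1) * β) / (n + 1) := by
  have hU (γ : ℝ) : Polynomial.eval (2 * cos γ / 2) (Polynomial.Chebyshev.U ℝ n) * sin γ =
      sin ((n + 1) * γ) := by
    rw [mul_div_cancel_left₀ _ two_ne_zero, Polynomial.Chebyshev.U_real_cos]; push_cast; rfl
  rw [Mterm, exp_neg_mul_succ_div_two, sqrt_four_sub_two_cos_sq hα, sqrt_four_sub_two_cos_sq hβ,
    ← hU α, ← hU β]
  ring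

lemma hasSum_Lterm_two_cos {t : ℝ} (ht : 0 < t) (α β : ℝ) :
    HasSum (Lterm t (2 * cos α) (2 * cos β))
      (-(1 / 4) * log (poissonDenom (exp (-t / 2)) (α - β) *
        poissonDenom (exp (-t / 2)) (α + β))) := by
  have hr := abs_exp_neg_half_lt_one ht
  convert ((hasSum_pow_mul_cos_div hr (α - β)).add (hasSum_pow_mul_cos_div hr (α + β))).div_const 2
    using 1
  · rfl
  · funext n
    rw [Lterm_two_cos, mul_sub, mul_add, cos_sub, cos_add]
    ring
  · rw [log_mul (poissonDenom_pos hr _).ne' (poissonDenom_pos hr _).ne']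
    ring

lemma hasSum_Mterm_two_cos {t : ℝ} (ht : 0 < t) {α β : ℝ} (hα : α ∈ Icc 0 π)
    (hβ : β ∈ Icc 0 π) :
    HasSum (Mterm t (2 * cos α) (2 * cos β))
      (-(1 / 4) * log (poissonDenom (exp (-t / 2)) (α - β) /
        poissonDenom (exp (-t / 2)) (α + β))) := by
  have hr := abs_exp_neg_half_lt_one ht
  convert ((hasSum_pow_mul_cos_div hr (α - β)).sub (hasSum_pow_mul_cos_div hr (α + β))).div_const 2
    using 1
  · rfl
  · funext n
    rw [Mterm_two_cos t hα hβ, mul_sub, mul_add, cos_sub, cos_add]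
    ring
  · rw [log_div (poissonDenom_pos hr _).ne' (poissonDenom_pos hr _).ne']
    ring

lemma exp_Lfun_two_cos {t : ℝ} (ht : 0 < t) (α β : ℝ) :
    exp (Lfun t (2 * cos α) (2 * cos β)) =
      (poissonDenom (exp (-t / 2)) (α - β) * poissonDenom (exp (-t / 2)) (α + β)) ^
        (-(1 / 4 : ℝ)) := by
  have hr := abs_exp_neg_half_lt_one ht
  rw [Lfun, (hasSum_Lterm_two_cos ht α β).tsum_eq,
    rpow_def_of_pos (mul_pos (poissonDenom_pos hr _) (poissonDenom_pos hr _)), mul_comm]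

lemma exp_Mfun_two_cos {t : ℝ} (ht : 0 < t) {α β : ℝ} (hα : α ∈ Icc 0 π) (hβ : β ∈ Icc 0 π) :
    exp (Mfun t (2 * cos α) (2 * cos β)) =
      (poissonDenom (exp (-t / 2)) (α - β) / poissonDenom (exp (-t / 2)) (α + β)) ^
        (-(1 / 4 : ℝ)) := by
  have hr := abs_exp_neg_half_lt_one ht
  rw [Mfun, (hasSum_Mterm_two_cos ht hα hβ).tsum_eq,
    rpow_def_of_pos (div_pos (poissonDenom_pos hr _) (poissonDenom_pos hr _)), mul_comm]

lemma one_sub_cos_eq_two_mul_sin_sq (θ : ℝ) : 1 - cos θ = 2 * sin (θ / 2) ^ 2 := by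
  rw [sin_sq_eq_half_sub, mul_div_cancel₀ _ two_ne_zero]; ring

lemma two_cos_sub_two_cos_sq (α β : ℝ) :
    (2 * cos α - 2 * cos β) ^ 2 = 8 * sin ((α + β) / 2) ^ 2 * (1 - cos (α - β)) := by
  rw [← mul_sub, cos_sub_cos, one_sub_cos_eq_two_mul_sin_sq]; ring

lemma le_sin_half_add_sq {m α β : ℝ} (hα : α ∈ Icc 0 π) (hβ : β ∈ Icc 0 π)
    (hmα : m ≤ sin α ^ 2) (hmβ : m ≤ sin β ^ 2) : m ≤ sin ((α + β) / 2) ^ 2 := by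
  have hsα := sin_nonneg_of_nonneg_of_le_pi hα.1 hα.2
  have hsβ := sin_nonneg_of_nonneg_of_le_pi hβ.1 hβ.2
  have hs := sin_nonneg_of_nonneg_of_le_pi (x := (α + β) / 2) (by linarith [hα.1, hβ.1])
    (by linarith [hα.2, hβ.2])
  -- concavity of `sin` on `[0, π]`
  have hmid : sin α + sin β ≤ 2 * sin ((α + β) / 2) := by
    rw [sin_add_sin]; nlinarith [cos_le_one ((α - β) / 2)]
  rcases le_total (sin α) (sin β) with h | h <;> nlinarith

lemma exp_neg_half_bounds {t : ℝ} (ht : t ∈ Ioc 0 1) :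
    1 / 2 ≤ exp (-t / 2) ∧ t / 4 ≤ 1 - exp (-t / 2) ∧ 1 - exp (-t / 2) ≤ t / 2 := by
  have hlow := add_one_le_exp (-t / 2)
  have hinv : exp (-t / 2) * exp (t / 2) = 1 := by rw [← exp_add]; ring_nf; exact exp_zero
  have hup := add_one_le_exp (t / 2)
  refine ⟨by linarith [ht.2], ?_, by linarith⟩
  nlinarith [exp_pos (-t / 2), ht.1, ht.2]

lemma one_sub_sq_add_one_sub_cos_le_poissonDenom {r : ℝ} (hr : 1 / 2 ≤ r) (θ : ℝ) :
    (1 - r) ^ 2 + (1 - cos θ) ≤ poissonDenom r θ := by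
  rw [poissonDenom_eq]; nlinarith [cos_le_one θ]

lemma poissonDenom_le_one_sub_sq_add {r : ℝ} (hr : r ≤ 1) (θ : ℝ) :
    poissonDenom r θ ≤ (1 - r) ^ 2 + 2 * (1 - cos θ) := by
  rw [poissonDenom_eq]; nlinarith [cos_le_one θ]

lemma div_sixteen_le_poissonDenom_sub {r t : ℝ} (hr : 1 / 2 ≤ r) (ht : 0 ≤ t)
    (htr : t / 4 ≤ 1 - r) (α β : ℝ) :
    (t ^ 2 + (2 * cos α - 2 * cos β) ^ 2) / 16 ≤ poissonDenom r (α - β) := by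
  have h := one_sub_sq_add_one_sub_cos_le_poissonDenom hr (α - β)
  rw [two_cos_sub_two_cos_sq]
  nlinarith [sin_sq_le_one ((α + β) / 2), cos_le_one (α - β)]

lemma poissonDenom_sub_le_div {r t m α β : ℝ} (hr : r ≤ 1) (htr : 1 - r ≤ t / 2) (hm : 0 < m)
    (hmσ : m ≤ sin ((α + β) / 2) ^ 2) :
    poissonDenom r (α - β) ≤ (t ^ 2 + (2 * cos α - 2 * cos β) ^ 2) / (4 * m) := by
  have h := poissonDenom_le_one_sub_sq_add hr (α - β)
  have hm1 : m ≤ 1 := hmσ.trans (sin_sq_le_one _)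
  rw [two_cos_sub_two_cos_sq, le_div_iff₀ (by positivity)]
  nlinarith [cos_le_one (α - β)]

lemma two_mul_le_poissonDenom_add {r m α β : ℝ} (hr : 1 / 2 ≤ r)
    (hmσ : m ≤ sin ((α + β) / 2) ^ 2) : 2 * m ≤ poissonDenom r (α + β) := by
  have h := one_sub_sq_add_one_sub_cos_le_poissonDenom hr (α + β)
  rw [one_sub_cos_eq_two_mul_sin_sq] at h
  nlinarith

lemma rpow_neg_le_mul_rpow_neg {u S c p : ℝ} (hS : 0 < S) (hc : 0 < c) (hp : 0 ≤ p)
    (h : S ≤ c * u) : u ^ (-p) ≤ c ^ p * S ^ (-p) := by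
  have hSc : S / c ≤ u := (div_le_iff₀' hc).2 h
  calc u ^ (-p) ≤ (S / c) ^ (-p) := rpow_le_rpow_of_nonpos (by positivity) hSc (by linarith)
    _ = c ^ p * S ^ (-p) := by
      rw [div_rpow hS.le hc.le, rpow_neg hc.le, div_inv_eq_mul, mul_comm]

lemma inv_rpow_mul_rpow_neg_le {u S c p : ℝ} (hu : 0 < u) (hS : 0 ≤ S) (hc : 0 ≤ c) (hp : 0 ≤ p)
    (h : u ≤ c * S) : (c ^ p)⁻¹ * S ^ (-p) ≤ u ^ (-p) := by
  rw [← rpow_neg hc, ← mul_rpow hc hS]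
  exact rpow_le_rpow_of_nonpos hu h (by linarith)

lemma exists_eq_two_cos {x : ℝ} (hx : x ∈ Icc (-2 : ℝ) 2) : ∃ α ∈ Icc 0 π, 2 * cos α = x :=
  ⟨arccos (x / 2), ⟨arccos_nonneg _, arccos_le_pi _⟩, by
    rw [cos_arccos (by linarith [hx.1]) (by linarith [hx.2])]; ring⟩

lemma summable_abs_of_abs_le_pow_succ {r : ℝ} {f : ℕ → ℝ} (hr₀ : 0 ≤ r) (hr₁ : r < 1)
    (hf : ∀ n, |f n| ≤ r ^ (n + 1)) : Summable fun n => |f n| :=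
  .of_nonneg_of_le (fun _ => abs_nonneg _) hf
    ((summable_nat_add_iff 1).2 (summable_geometric_of_lt_one hr₀ hr₁))

lemma abs_pow_succ_mul_mul_div_le {r a b : ℝ} (hr : 0 ≤ r) (ha : |a| ≤ 1) (hb : |b| ≤ 1)
    (n : ℕ) : |r ^ (n + 1) * a * b / (n + 1)| ≤ r ^ (n + 1) := by
  rw [abs_div, abs_mul, abs_mul, abs_pow, abs_of_nonneg hr]
  refine div_le_of_le_mul₀ (by positivity) (pow_nonneg hr _) ?_
  have hab : |a| * |b| ≤ 1 := mul_le_one₀ ha (abs_nonneg b) hb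
  rw [abs_of_nonneg (by positivity : (0 : ℝ) ≤ n + 1)]
  nlinarith [pow_nonneg hr (n + 1), abs_nonneg a, abs_nonneg b, (n.cast_nonneg : (0 : ℝ) ≤ n)]

lemma summable_abs_Lterm {t x y : ℝ} (ht : 0 < t) (hx : x ∈ Icc (-2 : ℝ) 2)
    (hy : y ∈ Icc (-2 : ℝ) 2) : Summable fun n => |Lterm t x y n| := by
  obtain ⟨α, -, rfl⟩ := exists_eq_two_cos hx
  obtain ⟨β, -, rfl⟩ := exists_eq_two_cos hy
  have hr := abs_exp_neg_half_lt_one ht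
  rw [abs_of_pos (exp_pos _)] at hr
  refine summable_abs_of_abs_le_pow_succ (exp_pos _).le hr fun n => ?_
  rw [Lterm_two_cos]
  exact abs_pow_succ_mul_mul_div_le (exp_pos _).le (abs_cos_le_one _) (abs_cos_le_one _) n

lemma summable_abs_Mterm {t x y : ℝ} (ht : 0 < t) (hx : x ∈ Icc (-2 : ℝ) 2)
    (hy : y ∈ Icc (-2 : ℝ) 2) : Summable fun n => |Mterm t x y n| := by
  obtain ⟨α, hα, rfl⟩ := exists_eq_two_cos hx
  obtain ⟨β, hβ, rfl⟩ := exists_eq_two_cos hy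
  have hr := abs_exp_neg_half_lt_one ht
  rw [abs_of_pos (exp_pos _)] at hr
  refine summable_abs_of_abs_le_pow_succ (exp_pos _).le hr fun n => ?_
  rw [Mterm_two_cos t hα hβ]
  exact abs_pow_succ_mul_mul_div_le (exp_pos _).le (abs_sin_le_one _) (abs_sin_le_one _) n

lemma exp_neg_half_add_exp_neg_one_le_one : exp (-1 / 2) + exp (-1) ≤ 1 := by
  have hq := quadratic_le_exp_of_nonneg (x := 1 / 2) (by norm_num)
  have h₁ : exp (-1 / 2) * exp (1 / 2) = 1 := by rw [← exp_add]; norm_num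
  have h₂ : exp (-1) = exp (-1 / 2) ^ 2 := by rw [← exp_nat_mul]; norm_num
  rw [h₂]
  nlinarith [exp_pos (-1 / 2)]

lemma neg_two_le_log_poissonDenom {r : ℝ} (hr₀ : 0 ≤ r) (hr : r ≤ exp (-1 / 2)) (θ : ℝ) :
    -2 ≤ log (poissonDenom r θ) := by
  have hr₁ : |r| < 1 := by
    rw [abs_of_nonneg hr₀]; exact hr.trans_lt (exp_lt_one_iff.2 (by norm_num))
  rw [le_log_iff_exp_le (poissonDenom_pos hr₁ θ), show exp (-2) = exp (-1) ^ 2 by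
    rw [← exp_nat_mul]; norm_num]
  calc exp (-1) ^ 2 ≤ (1 - r) ^ 2 := by
        have := exp_neg_half_add_exp_neg_one_le_one
        gcongr; linarith
    _ ≤ poissonDenom r θ := by rw [poissonDenom_eq]; nlinarith [cos_le_one θ]

lemma log_poissonDenom_le_two {r : ℝ} (hr : |r| < 1) (θ : ℝ) : log (poissonDenom r θ) ≤ 2 := by
  rw [log_le_iff_le_exp (poissonDenom_pos hr θ)]
  have := quadratic_le_exp_of_nonneg (x := 2) (by norm_num)
  linarith [poissonDenom_le_four hr.le θ]

lemma Lfun_le_one {t x y : ℝ} (ht : 1 ≤ t) (hx : x ∈ Icc (-2 : ℝ) 2)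
    (hy : y ∈ Icc (-2 : ℝ) 2) : Lfun t x y ≤ 1 := by
  obtain ⟨α, -, rfl⟩ := exists_eq_two_cos hx
  obtain ⟨β, -, rfl⟩ := exists_eq_two_cos hy
  have ht₀ : 0 < t := by linarith
  have hr : exp (-t / 2) ≤ exp (-1 / 2) := exp_le_exp.2 (by linarith)
  have hr₁ := abs_exp_neg_half_lt_one ht₀
  rw [Lfun, (hasSum_Lterm_two_cos ht₀ α β).tsum_eq,
    log_mul (poissonDenom_pos hr₁ _).ne' (poissonDenom_pos hr₁ _).ne']
  linarith [neg_two_le_log_poissonDenom (exp_pos _).le hr (α - β),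
    neg_two_le_log_poissonDenom (exp_pos _).le hr (α + β)]

lemma Mfun_le_one {t x y : ℝ} (ht : 1 ≤ t) (hx : x ∈ Icc (-2 : ℝ) 2)
    (hy : y ∈ Icc (-2 : ℝ) 2) : Mfun t x y ≤ 1 := by
  obtain ⟨α, hα, rfl⟩ := exists_eq_two_cos hx
  obtain ⟨β, hβ, rfl⟩ := exists_eq_two_cos hy
  have ht₀ : 0 < t := by linarith
  have hr : exp (-t / 2) ≤ exp (-1 / 2) := exp_le_exp.2 (by linarith)
  have hr₁ := abs_exp_neg_half_lt_one ht₀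
  rw [Mfun, (hasSum_Mterm_two_cos ht₀ hα hβ).tsum_eq,
    log_div (poissonDenom_pos hr₁ _).ne' (poissonDenom_pos hr₁ _).ne']
  linarith [neg_two_le_log_poissonDenom (exp_pos _).le hr (α - β),
    log_poissonDenom_le_two hr₁ (α + β)]

lemma exp_Mfun_le {t x y : ℝ} (ht : t ∈ Ioc 0 1) (hx : x ∈ Icc (-2 : ℝ) 2)
    (hy : y ∈ Icc (-2 : ℝ) 2) :
    exp (Mfun t x y) ≤ 64 ^ (1 / 4 : ℝ) * (t ^ 2 + (x - y) ^ 2) ^ (-(1 / 4 : ℝ)) := by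
  obtain ⟨α, hα, rfl⟩ := exists_eq_two_cos hx
  obtain ⟨β, hβ, rfl⟩ := exists_eq_two_cos hy
  obtain ⟨hr, htr, -⟩ := exp_neg_half_bounds ht
  have hr₁ := abs_exp_neg_half_lt_one ht.1
  have hsub := div_sixteen_le_poissonDenom_sub hr ht.1.le htr α β
  have hadd := poissonDenom_le_four hr₁.le (α + β)
  rw [exp_Mfun_two_cos ht.1 hα hβ]
  refine rpow_neg_le_mul_rpow_neg (by nlinarith [ht.1]) (by norm_num) (by norm_num) ?_
  rw [mul_div_assoc', le_div_iff₀ (poissonDenom_pos hr₁ _)]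
  nlinarith [poissonDenom_pos hr₁ (α - β)]

lemma exists_eq_two_cos_of_le_one_sub {m x : ℝ} (hm : 0 < m) (hx : m ≤ 1 - x ^ 2 / 4) :
    ∃ α ∈ Icc 0 π, m ≤ sin α ^ 2 ∧ 2 * cos α = x := by
  obtain ⟨α, hα, rfl⟩ := exists_eq_two_cos (abs_le_of_sq_le_sq' (by linarith) zero_le_two)
  exact ⟨α, hα, by nlinarith [sin_sq_add_cos_sq α], rfl⟩

lemma exp_Lfun_bounds {m t x y : ℝ} (hm : 0 < m) (ht : t ∈ Ioc 0 1) (hx : m ≤ 1 - x ^ 2 / 4)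
    (hy : m ≤ 1 - y ^ 2 / 4) :
    ((64 / m ^ 2) ^ (1 / 4 : ℝ))⁻¹ * (t ^ 2 + (x - y) ^ 2) ^ (-(1 / 4 : ℝ)) ≤ exp (Lfun t x y) ∧
      exp (Lfun t x y) ≤ (64 / m ^ 2) ^ (1 / 4 : ℝ) * (t ^ 2 + (x - y) ^ 2) ^ (-(1 / 4 : ℝ)) := by
  obtain ⟨α, hα, hmα, rfl⟩ := exists_eq_two_cos_of_le_one_sub hm hx
  obtain ⟨β, hβ, hmβ, rfl⟩ := exists_eq_two_cos_of_le_one_sub hm hy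
  have hσ := le_sin_half_add_sq hα hβ hmα hmβ
  have hm₁ : m ≤ 1 := hσ.trans (sin_sq_le_one _)
  obtain ⟨hr, htr, htr'⟩ := exp_neg_half_bounds ht
  have hr₁ := abs_exp_neg_half_lt_one ht.1
  have hS : 0 < t ^ 2 + (2 * cos α - 2 * cos β) ^ 2 := by nlinarith [ht.1]
  have hsub := div_sixteen_le_poissonDenom_sub hr ht.1.le htr α β
  have hsub' := poissonDenom_sub_le_div ((le_abs_self _).trans hr₁.le) htr' hm hσ
  have hadd := two_mul_le_poissonDenom_add hr hσ
  have hadd' := poissonDenom_le_four hr₁.le (α + β)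
  rw [exp_Lfun_two_cos ht.1]
  constructor
  · refine inv_rpow_mul_rpow_neg_le (mul_pos (poissonDenom_pos hr₁ _) (poissonDenom_pos hr₁ _))
      hS.le (by positivity) (by norm_num) ?_
    calc _ ≤ (t ^ 2 + (2 * cos α - 2 * cos β) ^ 2) / (4 * m) * 4 :=
          mul_le_mul hsub' hadd' (poissonDenom_pos hr₁ _).le (by positivity)
      _ ≤ _ := by
          rw [div_mul_eq_mul_div, div_le_iff₀ (by positivity), div_mul_eq_mul_div,
            div_mul_eq_mul_div, le_div_iff₀ (by positivity)]
          nlinarith [mul_pos hS hm]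
  · refine rpow_neg_le_mul_rpow_neg hS (by positivity) (by norm_num) ?_
    rw [div_mul_eq_mul_div, le_div_iff₀ (by positivity)]
    nlinarith [mul_le_mul_of_nonneg_left hadd (poissonDenom_pos hr₁ (α - β)).le,
      mul_le_mul_of_nonneg_right hsub hm.le, mul_le_mul_of_nonneg_left hm₁ (mul_pos hS hm).le]

lemma le_exp_Mfun {m t x y : ℝ} (hm : 0 < m) (ht : t ∈ Ioc 0 1) (hx : m ≤ 1 - x ^ 2 / 4)
    (hy : m ≤ 1 - y ^ 2 / 4) :
    ((64 / m ^ 2) ^ (1 / 4 : ℝ))⁻¹ * (t ^ 2 + (x - y) ^ 2) ^ (-(1 / 4 : ℝ)) ≤ exp (Mfun t x y) := by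
  obtain ⟨α, hα, hmα, rfl⟩ := exists_eq_two_cos_of_le_one_sub hm hx
  obtain ⟨β, hβ, hmβ, rfl⟩ := exists_eq_two_cos_of_le_one_sub hm hy
  have hσ := le_sin_half_add_sq hα hβ hmα hmβ
  obtain ⟨hr, -, htr'⟩ := exp_neg_half_bounds ht
  have hr₁ := abs_exp_neg_half_lt_one ht.1
  have hS : 0 < t ^ 2 + (2 * cos α - 2 * cos β) ^ 2 := by nlinarith [ht.1]
  have hadd := two_mul_le_poissonDenom_add hr hσ
  rw [exp_Mfun_two_cos ht.1 hα hβ]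
  refine inv_rpow_mul_rpow_neg_le (div_pos (poissonDenom_pos hr₁ _) (poissonDenom_pos hr₁ _))
    hS.le (by positivity) (by norm_num) ?_
  rw [div_le_iff₀ (poissonDenom_pos hr₁ _)]
  calc _ ≤ (t ^ 2 + (2 * cos α - 2 * cos β) ^ 2) / (4 * m) :=
        poissonDenom_sub_le_div ((le_abs_self _).trans hr₁.le) htr' hm hσ
    _ ≤ 64 / m ^ 2 * (t ^ 2 + (2 * cos α - 2 * cos β) ^ 2) * (2 * m) := by
        rw [div_le_iff₀ (by positivity)]
        field_simp
        nlinarith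
    _ ≤ _ := by gcongr

/-- Space-time logarithmic singularity of the covariance kernels. -/
theorem spacetime_log_singularity :
    -- absolute convergence of both series
    (∀ t : ℝ, 0 < t → ∀ x ∈ Set.Ioo (-2 : ℝ) 2, ∀ y ∈ Set.Ioo (-2 : ℝ) 2,
      (Summable fun n : ℕ => |Lterm t x y n|) ∧ (Summable fun n : ℕ => |Mterm t x y n|)) ∧
    -- two-sided bounds in the bulk and the global upper bound for `M`
    (∀ Υ ∈ Set.Ioo (0 : ℝ) 1, ∃ C : ℝ, 1 < C ∧
      (∀ x ∈ Set.Icc (-2 + Υ) (2 - Υ), ∀ y ∈ Set.Icc (-2 + Υ) (2 - Υ),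
        ∀ t ∈ Set.Ioc (0 : ℝ) 1,
          C⁻¹ * (t ^ 2 + (x - y) ^ 2) ^ (-(1 / 4 : ℝ)) ≤ Real.exp (Lfun t x y) ∧
          Real.exp (Lfun t x y) ≤ C * (t ^ 2 + (x - y) ^ 2) ^ (-(1 / 4 : ℝ)) ∧
          C⁻¹ * (t ^ 2 + (x - y) ^ 2) ^ (-(1 / 4 : ℝ)) ≤ Real.exp (Mfun t x y) ∧
          Real.exp (Mfun t x y) ≤ C * (t ^ 2 + (x - y) ^ 2) ^ (-(1 / 4 : ℝ))) ∧
      (∀ x ∈ Set.Ioo (-2 : ℝ) 2, ∀ y ∈ Set.Ioo (-2 : ℝ) 2, ∀ t ∈ Set.Ioc (0 : ℝ) 1,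
        Real.exp (Mfun t x y) ≤ C * (t ^ 2 + (x - y) ^ 2) ^ (-(1 / 4 : ℝ)))) ∧
    -- long-time bounds
    (∀ t : ℝ, 1 ≤ t → ∀ x ∈ Set.Ioo (-2 : ℝ) 2, ∀ y ∈ Set.Ioo (-2 : ℝ) 2,
      Real.exp (Lfun t x y) ≤ Real.exp 1 ∧ Real.exp (Mfun t x y) ≤ Real.exp 1) := by
  refine ⟨fun t ht x hx y hy => ⟨summable_abs_Lterm ht (Ioo_subset_Icc_self hx)
      (Ioo_subset_Icc_self hy), summable_abs_Mterm ht (Ioo_subset_Icc_self hx)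
      (Ioo_subset_Icc_self hy)⟩, fun Υ ⟨hΥ₀, hΥ₁⟩ => ?_, fun t ht x hx y hy =>
    ⟨exp_le_exp.2 (Lfun_le_one ht (Ioo_subset_Icc_self hx) (Ioo_subset_Icc_self hy)),
      exp_le_exp.2 (Mfun_le_one ht (Ioo_subset_Icc_self hx) (Ioo_subset_Icc_self hy))⟩⟩
  have hbulk (x : ℝ) (hx : x ∈ Icc (-2 + Υ) (2 - Υ)) : Υ / 2 ≤ 1 - x ^ 2 / 4 := by
    nlinarith [hx.1, hx.2]
  have hc : (64 : ℝ) ≤ 64 / (Υ / 2) ^ 2 :=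
    le_div_self (by norm_num) (by positivity) (by nlinarith)
  have hM (x) (hx : x ∈ Ioo (-2 : ℝ) 2) (y) (hy : y ∈ Ioo (-2 : ℝ) 2) (t) (ht : t ∈ Ioc (0 : ℝ) 1) :
      exp (Mfun t x y) ≤
        (64 / (Υ / 2) ^ 2) ^ (1 / 4 : ℝ) * (t ^ 2 + (x - y) ^ 2) ^ (-(1 / 4 : ℝ)) :=
    (exp_Mfun_le ht (Ioo_subset_Icc_self hx) (Ioo_subset_Icc_self hy)).trans <|
      mul_le_mul_of_nonneg_right (rpow_le_rpow (by norm_num) hc (by norm_num)) (by positivity)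
  refine ⟨_, one_lt_rpow (by linarith) (by norm_num), fun x hx y hy t ht => ?_, hM⟩
  obtain ⟨hL₁, hL₂⟩ := exp_Lfun_bounds (half_pos hΥ₀) ht (hbulk x hx) (hbulk y hy)
  exact ⟨hL₁, hL₂, le_exp_Mfun (half_pos hΥ₀) ht (hbulk x hx) (hbulk y hy),
    hM x ⟨by linarith [hx.1], by linarith [hx.2]⟩ y ⟨by linarith [hy.1], by linarith [hy.2]⟩ t ht⟩

end
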